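/- arXiv:1012.4025 — 4 statements merged into one kernel-verified Lean document; each statement's English description precedes it below -/
import Mathlib

section
/- Consider a linearized (DC) power flow instance. If (f, φ) and (f', φ') are both solutions of the power flow equations for the same supply–demand vector β, then f = f'; i.e., the solution of the linearized power flow system is unique in the flow variables. -/
open scoped Classical

/-- A pair `(f, φ)` solves the linearized (DC) power flow equations for the
supply–demand vector `β` on the grid given by `tail`, `head`, `x`. -/
def IsSolution {E V : Type*} [Fintype E] (tail head : E → V) (x : E → ℝ)
    (β : V → ℝ) (f : E → ℝ) (φ : V → ℝ) : Prop :=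
  (∀ v : V, (∑ e ∈ Finset.univ.filter (fun e => tail e = v), f e)
      - (∑ e ∈ Finset.univ.filter (fun e => head e = v), f e) = β v) ∧
  (∀ e : E, φ (tail e) - φ (head e) - x e * f e = 0)

/-- The solution of the linearized power flow system is unique in the flow
variables. -/
theorem flow_uniqueness {E V : Type*} [Fintype E] [Fintype V]
    (tail head : E → V) (x : E → ℝ) (hx : ∀ e, 0 < x e)
    (β : V → ℝ) (f f' : E → ℝ) (φ φ' : V → ℝ)
    (h : IsSolution tail head x β f φ) (h' : IsSolution tail head x β f' φ') :
    f = f' := by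
  obtain ⟨h1, h2⟩ := h
  obtain ⟨h1', h2'⟩ := h'
  set g : E → ℝ := fun e => f e - f' e with hg
  set ψ : V → ℝ := fun v => φ v - φ' v with hψ
  -- Ohm's law for the difference
  have hohm : ∀ e, x e * g e = ψ (tail e) - ψ (head e) := by
    intro e
    have := h2 e
    have := h2' e
    simp only [hg, hψ]
    nlinarith [h2 e, h2' e]
  -- zero divergence of the difference
  have hdiv : ∀ v : V, (∑ e ∈ Finset.univ.filter (fun e => tail e = v), g e)
      - (∑ e ∈ Finset.univ.filter (fun e => head e = v), g e) = 0 := by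
    intro v
    have := h1 v
    have := h1' v
    simp only [hg, Finset.sum_sub_distrib]
    linarith
  -- energy identity
  have key : ∑ e, x e * g e ^ 2 = 0 := by
    have e1 : ∑ e, x e * g e ^ 2 = ∑ e, (ψ (tail e) - ψ (head e)) * g e := by
      apply Finset.sum_congr rfl
      intro e _
      rw [← hohm e]; ring
    have e2 : ∑ e, (ψ (tail e) - ψ (head e)) * g e
        = (∑ e, ψ (tail e) * g e) - ∑ e, ψ (head e) * g e := by
      rw [← Finset.sum_sub_distrib]
      apply Finset.sum_congr rfl
      intro e _; ring
    have e3 : ∑ e, ψ (tail e) * g e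
        = ∑ v, ψ v * ∑ e ∈ Finset.univ.filter (fun e => tail e = v), g e := by
      rw [← Finset.sum_fiberwise Finset.univ tail (fun e => ψ (tail e) * g e)]
      apply Finset.sum_congr rfl
      intro v _
      rw [Finset.mul_sum]
      apply Finset.sum_congr rfl
      intro e he
      rw [Finset.mem_filter] at he
      rw [he.2]
    have e4 : ∑ e, ψ (head e) * g e
        = ∑ v, ψ v * ∑ e ∈ Finset.univ.filter (fun e => head e = v), g e := by
      rw [← Finset.sum_fiberwise Finset.univ head (fun e => ψ (head e) * g e)]
      apply Finset.sum_congr rfl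
      intro v _
      rw [Finset.mul_sum]
      apply Finset.sum_congr rfl
      intro e he
      rw [Finset.mem_filter] at he
      rw [he.2]
    rw [e1, e2, e3, e4, ← Finset.sum_sub_distrib]
    apply Finset.sum_eq_zero
    intro v _
    rw [← mul_sub, hdiv v, mul_zero]
  -- conclude each g e = 0
  funext e
  have hterm : x e * g e ^ 2 = 0 := by
    have hnn : ∀ e' ∈ Finset.univ, (0:ℝ) ≤ x e' * g e' ^ 2 := fun e' _ =>
      mul_nonneg (hx e').le (sq_nonneg _)
    exact (Finset.sum_eq_zero_iff_of_nonneg hnn).mp key e (Finset.mem_univ e)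
  have : g e = 0 := by
    rcases mul_eq_zero.mp hterm with h0 | h0
    · exact absurd h0 (hx e).ne'
    · exact sq_eq_zero_iff.mp h0
  simpa [hg, sub_eq_zero] using this
end

section
/- Consider a linearized (DC) power flow instance with supply–demand vector β : V → ℝ. There exist f : E → ℝ and φ : V → ℝ solving the power flow equations for β if and only if for every bus v, the sum of β over all buses in the connected component of v equals 0. -/
open scoped Classical

/-!
Let `δ φ = (φ (tail e) - φ (head e))ₑ` be the coboundary; its adjoint is the divergence, so a
solution is a `φ` with `β = δ* (x⁻¹ δ φ)`. For a symmetric definite weight `W` the operator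
`δ* W δ` is symmetric with the same kernel as `δ`, hence its range is `(ker δ)ᗮ = range δ*`:
`β` is attained by a potential as soon as it is the divergence of some flow. Finally `ker δ`
consists of the functions constant on components, so `β ⊥ ker δ` says exactly that `β` sums
to zero over every component.
-/

open scoped RealInnerProductSpace
open Finset LinearMap

theorem Finset.sum_mul_sum_fiberwise {ι κ R : Type*} [Fintype ι] [Fintype κ]
    [NonUnitalNonAssocSemiring R] (g : ι → κ) (φ : κ → R) (f : ι → R) :
    ∑ j, φ j * ∑ i ∈ univ.filter (fun i => g i = j), f i = ∑ i, φ (g i) * f i := by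
  rw [← sum_fiberwise univ g]
  refine sum_congr rfl fun j _ => ?_
  rw [mul_sum]
  exact sum_congr rfl fun i hi => by rw [(mem_filter.1 hi).2]

theorem Setoid.forall_sum_mul_eq_zero_iff {V R : Type*} [Fintype V] [CommSemiring R]
    (s : Setoid V) (β : V → R) :
    (∀ ψ : V → R, (∀ u v, s u v → ψ u = ψ v) → ∑ v, β v * ψ v = 0) ↔
      ∀ v, ∑ w ∈ univ.filter (fun w => s v w), β w = 0 := by
  constructor
  · intro h v
    have hclass : ∀ u w, s u w → (s v u ↔ s v w) := fun u w huw =>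
      ⟨fun hvu => s.trans hvu huw, fun hvw => s.trans hvw (s.symm huw)⟩
    simpa [sum_filter] using h (fun w => if s v w then (1 : R) else 0) fun u w huw => by
      simp only [hclass u w huw]
  · intro h ψ hψ
    rw [← sum_fiberwise univ (Quotient.mk s)]
    refine sum_eq_zero fun q _ => q.inductionOn fun u => ?_
    have hfiber : univ.filter (fun v => Quotient.mk s v = ⟦u⟧) = univ.filter (fun v => s u v) :=
      filter_congr fun v _ => Quotient.eq.trans ⟨s.symm, s.symm⟩
    rw [hfiber, ← mul_zero (ψ u), ← h u, mul_sum]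
    exact sum_congr rfl fun v hv => by rw [hψ u v (mem_filter.1 hv).2, mul_comm]

section
variable {𝕜 E F : Type*} [RCLike 𝕜] [NormedAddCommGroup E] [InnerProductSpace 𝕜 E]
  [FiniteDimensional 𝕜 E] [NormedAddCommGroup F] [InnerProductSpace 𝕜 F] [FiniteDimensional 𝕜 F]

theorem LinearMap.range_adjoint_comp_comp_self (A : E →ₗ[𝕜] F) {W : F →ₗ[𝕜] F}
    (hW : W.IsSymmetric) (hW₀ : ∀ y, inner 𝕜 (W y) y = 0 → y = 0) :
    range (A.adjoint ∘ₗ W ∘ₗ A) = range A.adjoint := by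
  have hsymm : (A.adjoint ∘ₗ W ∘ₗ A).IsSymmetric := fun u v => by
    simpa only [comp_apply, adjoint_inner_left, adjoint_inner_right] using hW (A u) (A v)
  have hker : ker (A.adjoint ∘ₗ W ∘ₗ A) = ker A := by
    refine le_antisymm (fun u hu => hW₀ (A u) ?_) (fun u hu => by simp_all)
    rw [← adjoint_inner_left, show A.adjoint (W (A u)) = 0 from hu, inner_zero_left]
  rw [← Submodule.orthogonal_orthogonal (range _), hsymm.orthogonal_range, hker, orthogonal_ker]

end

noncomputable section
namespace PowerFlow

variable {E V : Type*} (tail head : E → V)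

def coboundary : EuclideanSpace ℝ V →ₗ[ℝ] EuclideanSpace ℝ E where
  toFun φ := WithLp.toLp 2 fun e => φ (tail e) - φ (head e)
  map_add' φ ψ := by ext; simp only [PiLp.add_apply]; ring
  map_smul' c φ := by ext; simp only [PiLp.smul_apply, smul_eq_mul, RingHom.id_apply]; ring

def divergence [Fintype E] : EuclideanSpace ℝ E →ₗ[ℝ] EuclideanSpace ℝ V where
  toFun f := WithLp.toLp 2 fun v => (∑ e ∈ univ.filter (fun e => tail e = v), f e)
      - (∑ e ∈ univ.filter (fun e => head e = v), f e)
  map_add' f g := by ext; simp only [PiLp.add_apply, sum_add_distrib]; ring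
  map_smul' c f := by ext; simp only [PiLp.smul_apply, smul_eq_mul, RingHom.id_apply, ← mul_sum]; ring

def susceptance (x : E → ℝ) : EuclideanSpace ℝ E →ₗ[ℝ] EuclideanSpace ℝ E where
  toFun f := WithLp.toLp 2 fun e => f e / x e
  map_add' f g := by ext; simp only [PiLp.add_apply, add_div]
  map_smul' c f := by ext; simp only [PiLp.smul_apply, smul_eq_mul, RingHom.id_apply, mul_div_assoc]

abbrev SameComponent : V → V → Prop :=
  Relation.EqvGen fun a b => ∃ e, tail e = a ∧ head e = b

theorem mem_ker_coboundary {φ : EuclideanSpace ℝ V} :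
    φ ∈ ker (coboundary tail head) ↔ ∀ u v, SameComponent tail head u v → φ u = φ v := by
  have hker : φ ∈ ker (coboundary tail head) ↔ ∀ e, φ (tail e) = φ (head e) := by
    simp [coboundary, funext_iff, sub_eq_zero]
  rw [hker]
  refine ⟨fun h u v huv => ?_, fun h e => h _ _ (.rel _ _ ⟨e, rfl, rfl⟩)⟩
  induction huv with
  | rel a b hab => obtain ⟨e, rfl, rfl⟩ := hab; exact h e
  | refl => rfl
  | symm _ _ _ ih => exact ih.symm
  | trans _ _ _ _ _ ih₁ ih₂ => exact ih₁.trans ih₂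

variable [Fintype V]

theorem mem_orthogonal_ker_coboundary {β : EuclideanSpace ℝ V} :
    β ∈ (ker (coboundary tail head))ᗮ ↔
      ∀ v, ∑ w ∈ univ.filter (fun w => SameComponent tail head v w), β w = 0 := by
  rw [Submodule.mem_orthogonal]
  simp only [mem_ker_coboundary, PiLp.inner_apply, RCLike.inner_apply, conj_trivial]
  exact (WithLp.equiv 2 (V → ℝ)).symm.forall_congr_left.symm.trans
    ((Relation.EqvGen.setoid _).forall_sum_mul_eq_zero_iff β)

variable [Fintype E]

theorem adjoint_coboundary : (coboundary tail head).adjoint = divergence tail head := by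
  refine ((eq_adjoint_iff _ _).2 fun f φ => ?_).symm
  simp only [PiLp.inner_apply, RCLike.inner_apply, conj_trivial, divergence, coboundary,
    coe_mk, AddHom.coe_mk, sub_mul, mul_sub, sum_sub_distrib, sum_mul_sum_fiberwise]

theorem isSymmetric_susceptance (x : E → ℝ) : (susceptance x).IsSymmetric := fun f g => by
  simp only [susceptance, PiLp.inner_apply, RCLike.inner_apply, conj_trivial, coe_mk, AddHom.coe_mk]
  exact sum_congr rfl fun e _ => by ring

theorem eq_zero_of_inner_susceptance_self {x : E → ℝ} (hx : ∀ e, 0 < x e)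
    (f : EuclideanSpace ℝ E) (hf : ⟪susceptance x f, f⟫ = 0) : f = 0 := by
  simp only [susceptance, PiLp.inner_apply, RCLike.inner_apply, conj_trivial, coe_mk, AddHom.coe_mk] at hf
  have hnonneg : ∀ e ∈ univ, 0 ≤ f e * (f e / x e) := fun e _ => by
    rw [← mul_div_assoc]; exact div_nonneg (mul_self_nonneg _) (hx e).le
  ext e
  have hfe := (sum_eq_zero_iff_of_nonneg hnonneg).1 hf e (mem_univ e)
  rw [← mul_div_assoc, div_eq_zero_iff, mul_self_eq_zero] at hfe
  exact hfe.resolve_right (hx e).ne'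

def laplacian (x : E → ℝ) : EuclideanSpace ℝ V →ₗ[ℝ] EuclideanSpace ℝ V :=
  divergence tail head ∘ₗ susceptance x ∘ₗ coboundary tail head

theorem range_divergence : range (divergence tail head) = (ker (coboundary tail head))ᗮ := by
  rw [← adjoint_coboundary, orthogonal_ker]

theorem range_laplacian {x : E → ℝ} (hx : ∀ e, 0 < x e) :
    range (laplacian tail head x) = (ker (coboundary tail head))ᗮ := by
  rw [laplacian, ← adjoint_coboundary, range_adjoint_comp_comp_self _ (isSymmetric_susceptance x)
    (eq_zero_of_inner_susceptance_self hx), orthogonal_ker]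

end PowerFlow
end

open PowerFlow in
/-- The linearized power flow system for `β` is solvable if and only if `β`
sums to zero over every connected component (components being the classes of
the equivalence relation generated by the endpoint pairs of the lines). -/
theorem flow_existence_iff {E V : Type*} [Fintype E] [Fintype V]
    (tail head : E → V) (x : E → ℝ) (hx : ∀ e, 0 < x e) (β : V → ℝ) :
    (∃ (f : E → ℝ) (φ : V → ℝ), IsSolution tail head x β f φ) ↔
      (∀ v : V, ∑ w ∈ Finset.univ.filter
          (fun w => Relation.EqvGen (fun a b => ∃ e : E, tail e = a ∧ head e = b) v w),
            β w = 0) := by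
  rw [← mem_orthogonal_ker_coboundary tail head (β := WithLp.toLp 2 β)]
  constructor
  · rintro ⟨f, -, hf, -⟩
    rw [← range_divergence]
    exact ⟨WithLp.toLp 2 f, PiLp.ext hf⟩
  · intro hβ
    rw [← range_laplacian tail head hx] at hβ
    obtain ⟨φ, hφ⟩ := hβ
    refine ⟨susceptance x (coboundary tail head φ), φ, fun v => congr($hφ v), fun e => ?_⟩
    simp [susceptance, coboundary, mul_div_cancel₀ _ (hx e).ne']
end

section
/- Consider a linearized (DC) power flow instance, a supply–demand vector β : V → ℝ, and a real number t. If (f, φ) is a solution of the power flow equations for β and (g, ψ) is a solution of the power flow equations for t·β, then g = t·f; i.e., scaling the supply–demand vector by t scales the (unique) flow vector by t. -/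
open scoped Classical

lemma flow_sum_group {E V : Type*} [Fintype E] [Fintype V]
    (tail : E → V) (h : E → ℝ) (θ : V → ℝ) :
    ∑ e, h e * θ (tail e)
      = ∑ v, θ v * ∑ e ∈ Finset.univ.filter (fun e => tail e = v), h e := by
  rw [← Finset.sum_fiberwise Finset.univ tail (fun e => h e * θ (tail e))]
  refine Finset.sum_congr rfl fun v _ => ?_
  rw [Finset.mul_sum]
  refine Finset.sum_congr rfl fun e he => ?_
  simp only [Finset.mem_filter] at he
  rw [he.2]; ring

/-- Scaling the supply–demand vector by `t` scales the (unique) flow vector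
by `t`. -/
theorem flow_scaling {E V : Type*} [Fintype E] [Fintype V]
    (tail head : E → V) (x : E → ℝ) (hx : ∀ e, 0 < x e)
    (β : V → ℝ) (t : ℝ) (f g : E → ℝ) (φ ψ : V → ℝ)
    (h : IsSolution tail head x β f φ)
    (h' : IsSolution tail head x (fun v => t * β v) g ψ) :
    g = fun e => t * f e := by
  obtain ⟨hf1, hf2⟩ := h
  obtain ⟨hg1, hg2⟩ := h'
  set d : E → ℝ := fun e => g e - t * f e with hd
  set θ : V → ℝ := fun v => ψ v - t * φ v with hθ
  have cons : ∀ v, (∑ e ∈ Finset.univ.filter (fun e => tail e = v), d e)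
      - (∑ e ∈ Finset.univ.filter (fun e => head e = v), d e) = 0 := by
    intro v
    have h1 := hf1 v
    have h2 := hg1 v
    simp only [hd, Finset.sum_sub_distrib, ← Finset.mul_sum]
    linear_combination h2 - t * h1
  have ohm : ∀ e, θ (tail e) - θ (head e) = x e * d e := by
    intro e
    have h1 := hf2 e
    have h2 := hg2 e
    simp only [hθ, hd]
    linear_combination h2 - t * h1
  have key : ∑ e, x e * d e ^ 2 = 0 := by
    have e1 : ∑ e, x e * d e ^ 2 = ∑ e, d e * (θ (tail e) - θ (head e)) := by
      refine Finset.sum_congr rfl fun e _ => ?_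
      rw [ohm e]; ring
    rw [e1]
    have e2 : ∑ e, d e * (θ (tail e) - θ (head e))
        = (∑ e, d e * θ (tail e)) - ∑ e, d e * θ (head e) := by
      rw [← Finset.sum_sub_distrib]
      exact Finset.sum_congr rfl fun e _ => by ring
    rw [e2, flow_sum_group tail d θ, flow_sum_group head d θ,
      ← Finset.sum_sub_distrib]
    rw [show (0 : ℝ) = ∑ _v : V, (0 : ℝ) by simp]
    refine Finset.sum_congr rfl fun v _ => ?_
    rw [← mul_sub, cons v, mul_zero]
  have hzero : ∀ e : E, x e * d e ^ 2 = 0 := by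
    intro e
    have := (Finset.sum_eq_zero_iff_of_nonneg
      (fun e _ => mul_nonneg (hx e).le (sq_nonneg (d e)))).mp key
    exact this e (Finset.mem_univ e)
  funext e
  have hd0 : d e = 0 := by
    have hsq : d e ^ 2 = 0 := by
      rcases mul_eq_zero.mp (hzero e) with h | h
      · exact absurd h (hx e).ne'
      · exact h
    exact pow_eq_zero_iff two_ne_zero |>.mp hsq
  have : g e - t * f e = 0 := hd0
  linarith
end

section
/- Fix an integer R ≥ 1 and a power grid instance (G, u, x) with G connected, together with a supply–demand vector β summing to 0. Let f̂ = f̂(G, β) be the unique flow for β and let γ₁ < γ₂ < … < γ_p be the critical points, i.e., the distinct elements of { u e / |f̂ e| : f̂ e ≠ 0 }. Then for every t > 0 with ψ(G, β)·t > 0, the supremum over λ ∈ (0, 1] in the recursion defining Θ_G^{(R)}(t | β) is attained, and it is attained either at λ = 1 or at λ = γ_k / t for some critical point γ_k ≤ t. -/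
open scoped Classical

noncomputable section

/-- Two buses are connected in the subgraph with line set `H`. -/
def conn {V E : Type*} (tail head : E → V) (H : Finset E) (a b : V) : Prop :=
  Relation.EqvGen (fun s t => ∃ e ∈ H, tail e = s ∧ head e = t) a b

/-- The (vertex set of the) connected component of `v` in the subgraph with
line set `H`. -/
def compOf {V E : Type*} [Fintype V] (tail head : E → V) (H : Finset E) (v : V) :
    Finset V :=
  Finset.univ.filter (fun w => conn tail head H v w)

/-- `(f, φ)` solves the linearized power flow equations on the subgraph with
line set `H` for the supply–demand vector `μ`. -/
def IsSol {V E : Type*} (tail head : E → V) (x : E → ℝ) (H : Finset E)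
    (μ : V → ℝ) (f : E → ℝ) (φ : V → ℝ) : Prop :=
  (∀ v : V, (∑ e ∈ H.filter (fun e => tail e = v), f e)
      - (∑ e ∈ H.filter (fun e => head e = v), f e) = μ v) ∧
  (∀ e ∈ H, φ (tail e) - φ (head e) - x e * f e = 0)

/-- The (unique) flow vector on the subgraph with line set `H` for the
supply–demand vector `μ`, obtained by choice (and `0` if no solution exists). -/
def flowHat {V E : Type*} (tail head : E → V) (x : E → ℝ) (H : Finset E)
    (μ : V → ℝ) : E → ℝ :=
  if h : ∃ q : (E → ℝ) × (V → ℝ), IsSol tail head x H μ q.1 q.2 ∧ ∀ e ∉ H, q.1 e = 0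
  then h.choose.1 else 0

/-- Total demand `D̃(μ)`. -/
def Dtot {V : Type*} [Fintype V] (μ : V → ℝ) : ℝ :=
  ∑ v ∈ Finset.univ.filter (fun v => μ v < 0), (-μ v)

/-- Total supply `S(μ)`. -/
def Stot {V : Type*} [Fintype V] (μ : V → ℝ) : ℝ :=
  ∑ v ∈ Finset.univ.filter (fun v => 0 < μ v), μ v

/-- Maximum load `ψ(H, μ) = max_{e ∈ H} |f̂(H, μ) e| / u e` (`0` if `H` has no
lines). -/
def psi {V E : Type*} (tail head : E → V) (x u : E → ℝ) (H : Finset E)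
    (μ : V → ℝ) : ℝ :=
  if h : H.Nonempty then H.sup' h (fun e => |flowHat tail head x H μ e| / u e) else 0

/-- The set of lines of `H` outaged at scale `s`. -/
def outaged {V E : Type*} (tail head : E → V) (x u : E → ℝ) (H : Finset E)
    (μ : V → ℝ) (s : ℝ) : Finset E :=
  H.filter (fun e => u e < s * |flowHat tail head x H μ e|)

/-- The vertex sets of the connected components of the subgraph with line set `H`. -/
def comps {V E : Type*} [Fintype V] (tail head : E → V) (H : Finset E) :
    Finset (Finset V) :=
  Finset.univ.image (compOf tail head H)

/-- The lines of `H` with both endpoints in the vertex set `C`. -/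
def linesIn {V E : Type*} (tail head : E → V) (H : Finset E) (C : Finset V) :
    Finset E :=
  H.filter (fun e => tail e ∈ C ∧ head e ∈ C)

/-- Restriction of a supply–demand vector to a vertex set. -/
def restrict {V : Type*} (μ : V → ℝ) (C : Finset V) : V → ℝ := fun v =>
  if v ∈ C then μ v else 0

/-- The rebalanced supply–demand vector: demands are scaled by
(total supply)/(total demand) if demand exceeds supply, and otherwise supplies
are scaled by (total demand)/(total supply). -/
def rebal {V : Type*} [Fintype V] (μ : V → ℝ) : V → ℝ := fun v =>
  if Stot μ < Dtot μ then (if μ v < 0 then (Stot μ / Dtot μ) * μ v else μ v)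
  else (if 0 < μ v then (Dtot μ / Stot μ) * μ v else μ v)

/-- The optimal yield function: `Theta tail head x u n H μ t` is
`Θ_H^{(n+1)}(t | μ)`.  The base case `n = 0` is the termination round
`Θ^{(1)}(t | μ) = min(t, 1/ψ)·D̃(μ)` (with `t·D̃(μ)` when `ψ = 0`); the
recursive case takes the supremum over scaling multipliers `λ ∈ (0, 1]` of the
sum, over components of the network after outaging overloaded lines, of the
optimal yields of the rebalanced islands with one fewer round. -/
def Theta {V E : Type*} [Fintype V] [Fintype E] (tail head : E → V)
    (x u : E → ℝ) : ℕ → Finset E → (V → ℝ) → ℝ → ℝ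
  | 0, H, μ, t =>
      if psi tail head x u H μ = 0 then t * Dtot μ
      else min t (psi tail head x u H μ)⁻¹ * Dtot μ
  | (n + 1), H, μ, t =>
      sSup ((fun l : ℝ =>
        ∑ C ∈ comps tail head (H \ outaged tail head x u H μ (l * t)),
          Theta tail head x u n
            (linesIn tail head (H \ outaged tail head x u H μ (l * t)) C)
            (rebal (restrict μ C)) (l * t)) '' Set.Ioc (0 : ℝ) 1)

section AuxLemmas

variable {V E : Type*} [Fintype V] [Fintype E] (tail head : E → V) (x u : E → ℝ)

lemma dtot_nonneg (μ : V → ℝ) : 0 ≤ Dtot μ :=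
  Finset.sum_nonneg fun v hv => by
    have := (Finset.mem_filter.mp hv).2; linarith

lemma stot_nonneg (μ : V → ℝ) : 0 ≤ Stot μ :=
  Finset.sum_nonneg fun v hv => le_of_lt (Finset.mem_filter.mp hv).2

lemma dtot_le (μ : V → ℝ) : Dtot μ ≤ ∑ v, |μ v| := by
  unfold Dtot
  calc ∑ v ∈ Finset.univ.filter (fun v => μ v < 0), -μ v
      ≤ ∑ v ∈ Finset.univ.filter (fun v => μ v < 0), |μ v| :=
        Finset.sum_le_sum fun v _ => neg_le_abs _
    _ ≤ ∑ v, |μ v| := Finset.sum_le_sum_of_subset_of_nonneg (Finset.filter_subset _ _)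
        (fun v _ _ => abs_nonneg _)

lemma abs_rebal_le (μ : V → ℝ) (v : V) : |rebal μ v| ≤ |μ v| := by
  have hS : 0 ≤ Stot μ := stot_nonneg μ
  have hD : 0 ≤ Dtot μ := dtot_nonneg μ
  unfold rebal
  split_ifs with h1 h2 h3
  · rw [abs_mul]
    have h01 : |Stot μ / Dtot μ| ≤ 1 := by
      rw [abs_of_nonneg (div_nonneg hS hD)]
      exact div_le_one_of_le₀ (le_of_lt h1) hD
    nlinarith [abs_nonneg (μ v), abs_nonneg (Stot μ / Dtot μ)]
  · exact le_rfl
  · rw [abs_mul]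
    have h01 : |Dtot μ / Stot μ| ≤ 1 := by
      rcases eq_or_lt_of_le hS with h | h
      · rw [← h, div_zero, abs_zero]; norm_num
      · rw [abs_of_nonneg (div_nonneg hD hS)]
        exact div_le_one_of_le₀ (le_of_not_gt h1) (le_of_lt h)
    nlinarith [abs_nonneg (μ v), abs_nonneg (Dtot μ / Stot μ)]
  · exact le_rfl

lemma abs_restrict_le (μ : V → ℝ) (C : Finset V) (v : V) : |restrict μ C v| ≤ |μ v| := by
  unfold restrict; split_ifs <;> simp [abs_nonneg]

lemma sum_abs_rebal_restrict_le (μ : V → ℝ) (C : Finset V) :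
    ∑ v, |rebal (restrict μ C) v| ≤ ∑ v, |μ v| :=
  Finset.sum_le_sum fun v _ =>
    le_trans (abs_rebal_le _ v) (abs_restrict_le μ C v)

lemma card_comps_le (H : Finset E) : (comps tail head H).card ≤ Fintype.card V := by
  unfold comps
  exact le_trans Finset.card_image_le (by simp)

lemma summand_le (n : ℕ) (H : Finset E) (μ : V → ℝ) {s : ℝ} (hs : 0 < s) {l : ℝ}
    (hl : l ∈ Set.Ioc (0:ℝ) 1)
    (ih : ∀ (H : Finset E) (μ : V → ℝ) (s : ℝ), 0 < s →
      Theta tail head x u n H μ s ≤ (Fintype.card V : ℝ)^n * (s * ∑ v, |μ v|)) :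
    (∑ C ∈ comps tail head (H \ outaged tail head x u H μ (l*s)),
       Theta tail head x u n (linesIn tail head (H \ outaged tail head x u H μ (l*s)) C)
         (rebal (restrict μ C)) (l*s))
      ≤ (Fintype.card V : ℝ)^(n+1) * (s * ∑ v, |μ v|) := by
  have hls : 0 < l * s := mul_pos hl.1 hs
  have hM : 0 ≤ ∑ v, |μ v| := Finset.sum_nonneg fun v _ => abs_nonneg _
  have hN : (0:ℝ) ≤ (Fintype.card V : ℝ)^n := by positivity
  calc (∑ C ∈ comps tail head (H \ outaged tail head x u H μ (l*s)),
       Theta tail head x u n (linesIn tail head (H \ outaged tail head x u H μ (l*s)) C)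
         (rebal (restrict μ C)) (l*s))
      ≤ ∑ _C ∈ comps tail head (H \ outaged tail head x u H μ (l*s)),
          (Fintype.card V : ℝ)^n * (s * ∑ v, |μ v|) := by
        apply Finset.sum_le_sum
        intro C _
        refine le_trans (ih _ _ _ hls) ?_
        have h1 : ∑ v, |rebal (restrict μ C) v| ≤ ∑ v, |μ v| :=
          sum_abs_rebal_restrict_le μ C
        have h1' : 0 ≤ ∑ v, |rebal (restrict μ C) v| :=
          Finset.sum_nonneg fun v _ => abs_nonneg _
        have h2 : l * s ≤ s := by nlinarith [hl.2, hl.1]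
        have : l * s * (∑ v, |rebal (restrict μ C) v|) ≤ s * ∑ v, |μ v| :=
          mul_le_mul h2 h1 h1' (le_of_lt hs)
        nlinarith
    _ = ((comps tail head (H \ outaged tail head x u H μ (l*s))).card : ℝ) *
          ((Fintype.card V : ℝ)^n * (s * ∑ v, |μ v|)) := by
        rw [Finset.sum_const, nsmul_eq_mul]
    _ ≤ (Fintype.card V : ℝ) * ((Fintype.card V : ℝ)^n * (s * ∑ v, |μ v|)) := by
        have hc : ((comps tail head (H \ outaged tail head x u H μ (l*s))).card : ℝ)
            ≤ (Fintype.card V : ℝ) := by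
          exact_mod_cast card_comps_le tail head (H \ outaged tail head x u H μ (l*s))
        have hx0 : 0 ≤ (Fintype.card V : ℝ)^n * (s * ∑ v, |μ v|) := by positivity
        exact mul_le_mul_of_nonneg_right hc hx0
    _ = (Fintype.card V : ℝ)^(n+1) * (s * ∑ v, |μ v|) := by ring

lemma theta_le_bound : ∀ (n : ℕ) (H : Finset E) (μ : V → ℝ) (s : ℝ), 0 < s →
    Theta tail head x u n H μ s ≤ (Fintype.card V : ℝ)^n * (s * ∑ v, |μ v|) := by
  intro n
  induction n with
  | zero =>
    intro H μ s hs
    have hD := dtot_nonneg (V := V) μ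
    have hDle := dtot_le (V := V) μ
    simp only [Theta, pow_zero, one_mul]
    split_ifs with h
    · nlinarith
    · have hmin : min s (psi tail head x u H μ)⁻¹ ≤ s := min_le_left _ _
      nlinarith
  | succ n ih =>
    intro H μ s hs
    simp only [Theta]
    apply csSup_le
    · exact Set.Nonempty.image _ ⟨1, by norm_num⟩
    · rintro y ⟨l, hl, rfl⟩
      exact summand_le tail head x u n H μ hs hl ih

lemma theta_mono : ∀ (n : ℕ) (H : Finset E) (μ : V → ℝ) (t₁ t₂ : ℝ), 0 < t₁ → t₁ ≤ t₂ →
    Theta tail head x u n H μ t₁ ≤ Theta tail head x u n H μ t₂ := by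
  intro n
  induction n with
  | zero =>
    intro H μ t₁ t₂ h1 h12
    have hD := dtot_nonneg (V := V) μ
    simp only [Theta]
    split_ifs with h
    · nlinarith
    · have hmin : min t₁ (psi tail head x u H μ)⁻¹ ≤ min t₂ (psi tail head x u H μ)⁻¹ :=
        min_le_min h12 le_rfl
      nlinarith
  | succ n ih =>
    intro H μ t₁ t₂ h1 h12
    have h2 : (0:ℝ) < t₂ := lt_of_lt_of_le h1 h12
    simp only [Theta]
    apply csSup_le_csSup
    · refine ⟨(Fintype.card V : ℝ)^(n+1) * (t₂ * ∑ v, |μ v|), ?_⟩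
      rintro y ⟨l, hl, rfl⟩
      exact summand_le tail head x u n H μ h2 hl (theta_le_bound tail head x u n)
    · exact Set.Nonempty.image _ ⟨1, by norm_num⟩
    · rintro y ⟨l, hl, rfl⟩
      refine ⟨l * t₁ / t₂, ⟨?_, ?_⟩, ?_⟩
      · exact div_pos (mul_pos hl.1 h1) h2
      · rw [div_le_one h2]; nlinarith [hl.1, hl.2]
      · have key : l * t₁ / t₂ * t₂ = l * t₁ := div_mul_cancel₀ _ (ne_of_gt h2)
        dsimp only
        rw [key]

end AuxLemmas

/-- For `G` connected and `β` summing to `0`, and every `t > 0` with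
`ψ(G, β)·t > 0`, the supremum over `λ ∈ (0, 1]` in the recursion defining
`Θ_G^{(R)}(t | β)` is attained, and it is attained either at `λ = 1` or at
`λ = γ_k / t` for some critical point `γ_k = u e / |f̂ e|` with `γ_k ≤ t`. -/
theorem theta_sup_attained {V E : Type*} [Fintype V] [Fintype E]
    (tail head : E → V) (x u : E → ℝ)
    (hx : ∀ e, 0 < x e) (hu : ∀ e, 0 < u e)
    (R : ℕ) (hR : 1 ≤ R)
    (β : V → ℝ) (hβ : ∑ v, β v = 0)
    (hconn : ∀ a b : V, conn tail head Finset.univ a b) :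
    ∀ t : ℝ, 0 < t → 0 < psi tail head x u Finset.univ β * t →
      ∀ F : ℝ → ℝ,
        (∀ l : ℝ, F l =
          ∑ C ∈ comps tail head
              (Finset.univ \ outaged tail head x u Finset.univ β (l * t)),
            Theta tail head x u (R - 2)
              (linesIn tail head
                (Finset.univ \ outaged tail head x u Finset.univ β (l * t)) C)
              (rebal (restrict β C)) (l * t)) →
        ∃ l ∈ Set.Ioc (0 : ℝ) 1,
          F l = sSup (F '' Set.Ioc (0 : ℝ) 1) ∧
          (l = 1 ∨ ∃ e : E, flowHat tail head x Finset.univ β e ≠ 0 ∧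
            u e / |flowHat tail head x Finset.univ β e| ≤ t ∧
            l = (u e / |flowHat tail head x Finset.univ β e|) / t) := by
  intro t ht _hpsit F hF
  classical
  set f : E → ℝ := flowHat tail head x Finset.univ β with hfdef
  set L : Finset ℝ := insert 1 (((Finset.univ : Finset E).filter
      (fun e => f e ≠ 0 ∧ u e / |f e| ≤ t)).image (fun e => u e / |f e| / t)) with hLdef
  have hL1 : (1:ℝ) ∈ L := Finset.mem_insert_self _ _
  have hLmem : ∀ c ∈ L, c ∈ Set.Ioc (0:ℝ) 1 := by
    intro c hc
    rw [hLdef, Finset.mem_insert] at hc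
    rcases hc with rfl | hc
    · exact ⟨one_pos, le_rfl⟩
    · obtain ⟨e, he, rfl⟩ := Finset.mem_image.mp hc
      rw [Finset.mem_filter] at he
      obtain ⟨-, hne, hle⟩ := he
      have hfa : 0 < |f e| := abs_pos.mpr hne
      have hue := hu e
      exact ⟨by positivity, (div_le_one ht).mpr hle⟩
  have key : ∀ l ∈ Set.Ioc (0:ℝ) 1, ∃ l' ∈ L, F l ≤ F l' := by
    intro l hl
    have hne : (L.filter (fun c => l ≤ c)).Nonempty :=
      ⟨1, Finset.mem_filter.mpr ⟨hL1, hl.2⟩⟩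
    set l' := (L.filter (fun c => l ≤ c)).min' hne with hl'def
    have hl'mem : l' ∈ L.filter (fun c => l ≤ c) := Finset.min'_mem _ _
    have hl'L : l' ∈ L := (Finset.mem_filter.mp hl'mem).1
    have hll' : l ≤ l' := (Finset.mem_filter.mp hl'mem).2
    have hl'min : ∀ c ∈ L, l ≤ c → l' ≤ c := fun c hc hlc =>
      Finset.min'_le _ _ (Finset.mem_filter.mpr ⟨hc, hlc⟩)
    have hl'Ioc := hLmem _ hl'L
    refine ⟨l', hl'L, ?_⟩
    have hout : outaged tail head x u Finset.univ β (l * t)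
        = outaged tail head x u Finset.univ β (l' * t) := by
      unfold outaged
      rw [← hfdef]
      apply Finset.filter_congr
      intro e _
      constructor
      · intro h
        have : l * t * |f e| ≤ l' * t * |f e| := by
          nlinarith [mul_nonneg (mul_nonneg (sub_nonneg.mpr hll') (le_of_lt ht)) (abs_nonneg (f e))]
        linarith
      · intro h
        by_contra hcon
        push_neg at hcon
        have hne0 : f e ≠ 0 := by
          intro h0
          rw [h0] at h
          simp only [abs_zero, mul_zero] at h
          exact absurd h (not_lt.mpr (le_of_lt (hu e)))
        have hfa : 0 < |f e| := abs_pos.mpr hne0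
        have hγlt : u e / |f e| < l' * t := (div_lt_iff₀ hfa).mpr (by linarith)
        have hγle : u e / |f e| ≤ t := by nlinarith [hl'Ioc.2]
        have hlγ : l ≤ u e / |f e| / t := by
          rw [le_div_iff₀ ht, le_div_iff₀ hfa]
          linarith
        have hmemL : u e / |f e| / t ∈ L := by
          rw [hLdef]
          exact Finset.mem_insert_of_mem (Finset.mem_image.mpr
            ⟨e, Finset.mem_filter.mpr ⟨Finset.mem_univ e, hne0, hγle⟩, rfl⟩)
        have hfin : l' * t ≤ u e / |f e| :=
          (le_div_iff₀ ht).mp (hl'min _ hmemL hlγ)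
        linarith
    rw [hF l, hF l', hout]
    apply Finset.sum_le_sum
    intro C _
    exact theta_mono tail head x u (R - 2) _ _ _ _ (mul_pos hl.1 ht)
      (mul_le_mul_of_nonneg_right hll' (le_of_lt ht))
  obtain ⟨lstar, hlstarL, hmax⟩ := Finset.exists_max_image L F ⟨1, hL1⟩
  have hub : ∀ y ∈ F '' Set.Ioc (0:ℝ) 1, y ≤ F lstar := by
    rintro y ⟨l, hl, rfl⟩
    obtain ⟨l', hl'L, hle⟩ := key l hl
    exact le_trans hle (hmax l' hl'L)
  refine ⟨lstar, hLmem _ hlstarL, ?_, ?_⟩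
  · refine le_antisymm (le_csSup ⟨F lstar, hub⟩ ⟨lstar, hLmem _ hlstarL, rfl⟩)
      (csSup_le ⟨F 1, ⟨1, ⟨one_pos, le_rfl⟩, rfl⟩⟩ hub)
  · rcases Finset.mem_insert.mp hlstarL with h | h
    · exact Or.inl h
    · obtain ⟨e, he, heq⟩ := Finset.mem_image.mp h
      rw [Finset.mem_filter] at he
      exact Or.inr ⟨e, he.2.1, he.2.2, heq.symm⟩
end
end
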